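/- Let α ∈ (0,2) and p > 0, and set d = 1. There exists a constant c = c(p,α) > 0 such that for every x ≥ 1, the principal-value limit Δ̂_1^{α/2} w_p(x) := lim_{ε→0+} ∫_{{y ∈ ℝ : ε < |y−x| < 1}} (w_p(y) − w_p(x)) · 𝒜(1,α) · |x−y|^{−1−α} dy exists and satisfies |Δ̂_1^{α/2} w_p(x)| ≤ c · x^{p−2}. -/

import Mathlib

open MeasureTheory Filter

/-- The constant `𝒜(d,α) = α·2^{α−1}·π^{−d/2}·Γ((d+α)/2)/Γ(1−α/2)`. -/
noncomputable def frakA (d : ℕ) (α : ℝ) : ℝ :=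
  α * (2 : ℝ) ^ (α - 1) * Real.pi ^ (-(d : ℝ) / 2) *
    Real.Gamma (((d : ℝ) + α) / 2) / Real.Gamma (1 - α / 2)

/-- The function `w_p(x) = (max(x_1,0))^p` on `ℝ^d`. -/
noncomputable def wp (d : ℕ) (hd : 0 < d) (p : ℝ) (x : EuclideanSpace ℝ (Fin d)) : ℝ :=
  max (x ⟨0, hd⟩) 0 ^ p

/-- `truncFracLapPV d α lam u x L` says that the principal-value limit defining the
`lam`-truncated fractional Laplacian `Δ̂_{d,lam}^{α/2} u(x)` exists and equals `L`. -/
def truncFracLapPV (d : ℕ) (α lam : ℝ) (u : EuclideanSpace ℝ (Fin d) → ℝ)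
    (x : EuclideanSpace ℝ (Fin d)) (L : ℝ) : Prop :=
  Tendsto (fun ε : ℝ =>
      ∫ y in {y : EuclideanSpace ℝ (Fin d) | ε < ‖y - x‖ ∧ ‖y - x‖ < lam},
        (u y - u x) * frakA d α * ‖x - y‖ ^ (-((d : ℝ) + α)))
    (nhdsWithin 0 (Set.Ioi 0)) (nhds L)

/-! For `x ≥ 1` and `0 < h ≤ 1` the function `w_p` agrees with `t ↦ t ^ p` on
`[x - h, x + h]`, and the principal value symmetrizes into
`∫₀¹ (w(x+h) + w(x-h) - 2 w(x)) 𝒜 h^(-1-α) dh`. The second difference is `O(x^(p-2) h²)`: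
by the mean value theorem applied twice when `h ≤ x/2`, since then `t^(p-2) ≤ 2^|p-2| x^(p-2)`
on `[x - h, x + h]`, and trivially when `h > x/2`, since then `x^p ≤ 4 x^(p-2) h²`. So the
integrand is `O(x^(p-2) h^(1-α))`, which is integrable on `(0, 1]` because `α < 2`; this gives
both the existence of the limit and the bound `𝒜 C x^(p-2) / (2 - α)`. -/

open Set Real Topology

lemma abs_second_diff_le_of_hasDerivAt {g g' g'' : ℝ → ℝ} {x h M : ℝ} (hh : 0 ≤ h)
    (hg : ∀ t ∈ Icc (x - h) (x + h), HasDerivAt g (g' t) t)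
    (hg' : ∀ t ∈ Icc (x - h) (x + h), HasDerivAt g' (g'' t) t)
    (hM : ∀ t ∈ Icc (x - h) (x + h), |g'' t| ≤ M) :
    |g (x + h) + g (x - h) - 2 * g x| ≤ 2 * M * h ^ 2 := by
  have hM0 : 0 ≤ M := (abs_nonneg _).trans (hM x ⟨by linarith, by linarith⟩)
  have hg'_sub : ∀ s ∈ Icc 0 h, |g' (x + s) - g' (x - s)| ≤ 2 * M * h := by
    rintro s ⟨hs0, hsh⟩
    have := (convex_Icc (x - h) (x + h)).norm_image_sub_le_of_norm_hasDerivWithin_le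
      (fun t ht => (hg' t ht).hasDerivWithinAt) hM
      (⟨by linarith, by linarith⟩ : x - s ∈ Icc (x - h) (x + h))
      (⟨by linarith, by linarith⟩ : x + s ∈ Icc (x - h) (x + h))
    rw [Real.norm_eq_abs, Real.norm_eq_abs,
      abs_of_nonneg (by linarith : 0 ≤ x + s - (x - s))] at this
    nlinarith
  have hφ : ∀ s ∈ Icc 0 h, HasDerivWithinAt (fun s => g (x + s) + g (x - s))
      (g' (x + s) - g' (x - s)) (Icc 0 h) s := by
    rintro s ⟨hs0, hsh⟩
    have h₁ := (hg (x + s) ⟨by linarith, by linarith⟩).comp_const_add x s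
    have h₂ := (hg (x - s) ⟨by linarith, by linarith⟩).comp_const_sub x s
    rw [sub_eq_add_neg (g' _)]
    exact (h₁.add h₂).hasDerivWithinAt
  have := (convex_Icc 0 h).norm_image_sub_le_of_norm_hasDerivWithin_le hφ hg'_sub
    ⟨le_rfl, hh⟩ ⟨hh, le_rfl⟩
  simp only [Real.norm_eq_abs, add_zero, sub_zero, abs_of_nonneg hh] at this
  calc |g (x + h) + g (x - h) - 2 * g x|
      = |g (x + h) + g (x - h) - (g x + g x)| := by rw [two_mul]
    _ ≤ 2 * M * h * h := this
    _ = 2 * M * h ^ 2 := by ring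

lemma rpow_le_two_rpow_abs_mul_rpow {x t : ℝ} (q : ℝ) (hx : 0 < x) (ht₁ : x / 2 ≤ t)
    (ht₂ : t ≤ 2 * x) : t ^ q ≤ 2 ^ |q| * x ^ q := by
  have hratio : (t / x) ^ q ≤ 2 ^ |q| := by
    rcases le_total 0 q with hq | hq
    · rw [abs_of_nonneg hq]
      exact rpow_le_rpow (div_nonneg (by linarith) hx.le) ((div_le_iff₀ hx).2 ht₂) hq
    · rw [abs_of_nonpos hq, rpow_neg zero_le_two, ← inv_rpow zero_le_two]
      exact rpow_le_rpow_of_nonpos (by norm_num) ((le_div_iff₀ hx).2 (by linarith)) hq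
  calc t ^ q = (t / x) ^ q * x ^ q := by
        rw [← mul_rpow (div_nonneg (by linarith) hx.le) hx.le, div_mul_cancel₀ _ hx.ne']
    _ ≤ 2 ^ |q| * x ^ q := by gcongr

lemma abs_rpow_second_diff_le_of_le_half (p : ℝ) {x h : ℝ} (hx : 0 < x) (hh : 0 ≤ h)
    (hhx : h ≤ x / 2) :
    |(x + h) ^ p + (x - h) ^ p - 2 * x ^ p|
      ≤ 2 * (|p * (p - 1)| * 2 ^ |p - 2| * x ^ (p - 2)) * h ^ 2 := by
  have hpos : ∀ t ∈ Icc (x - h) (x + h), 0 < t := fun t ht => by linarith [ht.1]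
  refine abs_second_diff_le_of_hasDerivAt (g := fun t => t ^ p) hh
    (g' := fun t => p * t ^ (p - 1)) (g'' := fun t => p * ((p - 1) * t ^ (p - 2)))
    (fun t ht => ?_) (fun t ht => ?_) (fun t ht => ?_)
  · exact hasDerivAt_rpow_const (Or.inl (hpos t ht).ne')
  · have := (hasDerivAt_rpow_const (p := p - 1) (Or.inl (hpos t ht).ne')).const_mul p
    rwa [show p - 1 - 1 = p - 2 by ring] at this
  · rw [← mul_assoc, abs_mul, abs_of_pos (rpow_pos_of_pos (hpos t ht) _), mul_assoc]
    gcongr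
    exact rpow_le_two_rpow_abs_mul_rpow _ hx (by linarith [ht.1]) (by linarith [ht.2])

lemma abs_rpow_second_diff_le_of_half_le {p x h : ℝ} (hp : 0 ≤ p) (hx : 0 < x) (hhx : h ≤ x)
    (hxh : x ≤ 2 * h) :
    |(x + h) ^ p + (x - h) ^ p - 2 * x ^ p| ≤ 4 * (2 ^ p + 3) * x ^ (p - 2) * h ^ 2 := by
  have hx2 : x ^ p = x ^ (p - 2) * x ^ 2 := by
    rw [← rpow_natCast, ← rpow_add hx]; norm_num
  have hplus : (x + h) ^ p ≤ 2 ^ p * x ^ p := by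
    rw [← mul_rpow zero_le_two hx.le]; exact rpow_le_rpow (by linarith) (by linarith) hp
  have hminus : (x - h) ^ p ≤ x ^ p := rpow_le_rpow (by linarith) (by linarith) hp
  have : 0 ≤ (x + h) ^ p := rpow_nonneg (by linarith) p
  have : 0 ≤ (x - h) ^ p := rpow_nonneg (by linarith) p
  have : 0 ≤ x ^ (p - 2) := rpow_nonneg hx.le _
  have : 0 ≤ (2 : ℝ) ^ p := by positivity
  calc |(x + h) ^ p + (x - h) ^ p - 2 * x ^ p| ≤ (2 ^ p + 3) * x ^ p := by
        rw [abs_le]; constructor <;> nlinarith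
    _ = (2 ^ p + 3) * x ^ (p - 2) * x ^ 2 := by rw [hx2]; ring
    _ ≤ (2 ^ p + 3) * x ^ (p - 2) * (4 * h ^ 2) := by gcongr; nlinarith
    _ = 4 * (2 ^ p + 3) * x ^ (p - 2) * h ^ 2 := by ring

lemma exists_abs_rpow_second_diff_le {p : ℝ} (hp : 0 ≤ p) :
    ∃ C, 0 < C ∧ ∀ x h : ℝ, 0 < x → 0 ≤ h → h ≤ x →
      |(x + h) ^ p + (x - h) ^ p - 2 * x ^ p| ≤ C * x ^ (p - 2) * h ^ 2 := by
  refine ⟨2 * |p * (p - 1)| * 2 ^ |p - 2| + 4 * (2 ^ p + 3), by positivity,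
    fun x h hx hh hhx => ?_⟩
  have hsmooth : 0 ≤ 2 * |p * (p - 1)| * 2 ^ |p - 2| * (x ^ (p - 2) * h ^ 2) := by positivity
  have hrough : 0 ≤ 4 * (2 ^ p + 3) * (x ^ (p - 2) * h ^ 2) := by positivity
  rcases le_total h (x / 2) with hsmall | hlarge
  · have := abs_rpow_second_diff_le_of_le_half p hx hh hsmall
    linarith
  · have := abs_rpow_second_diff_le_of_half_le hp hx hhx (by linarith)
    linarith

lemma abs_second_diff_mul_rpow_le {u : ℝ → ℝ} {x h C K α : ℝ} (h0 : 0 < h) (hK : 0 ≤ K)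
    (hu : |u (x + h) + u (x - h) - 2 * u x| ≤ C * h ^ 2) :
    |(u (x + h) + u (x - h) - 2 * u x) * K * h ^ (-(1 + α))| ≤ K * C * h ^ (1 - α) := by
  have hpow : h ^ 2 * h ^ (-(1 + α)) = h ^ (1 - α) := by
    rw [← rpow_natCast, ← rpow_add h0]
    congr 1
    push_cast
    ring
  rw [abs_mul, abs_mul, abs_of_nonneg hK, abs_of_pos (rpow_pos_of_pos h0 _), ← hpow]
  calc |u (x + h) + u (x - h) - 2 * u x| * K * h ^ (-(1 + α))
      ≤ C * h ^ 2 * K * h ^ (-(1 + α)) := by gcongr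
    _ = K * C * (h ^ 2 * h ^ (-(1 + α))) := by ring

lemma frakA_pos {d : ℕ} {α : ℝ} (hα₀ : 0 < α) (hα₂ : α < 2) : 0 < frakA d α := by
  have := Gamma_pos_of_pos (by positivity : 0 < ((d : ℝ) + α) / 2)
  have := Gamma_pos_of_pos (by linarith : 0 < 1 - α / 2)
  unfold frakA
  positivity

lemma tendsto_intervalIntegral_nhdsGT {f : ℝ → ℝ} {a b : ℝ} (hab : a < b)
    (hf : IntegrableOn f (Ioc a b)) :
    Tendsto (fun ε => ∫ t in ε..b, f t) (𝓝[>] a) (𝓝 (∫ t in a..b, f t)) := by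
  rw [← integrableOn_Icc_iff_integrableOn_Ioc, ← uIcc_of_le hab.le] at hf
  have := intervalIntegral.continuousOn_primitive_interval_left hf a left_mem_uIcc
  rw [uIcc_of_le hab.le] at this
  exact this.tendsto.mono_left (nhdsWithin_le_of_mem (Icc_mem_nhdsGT hab))

section PowerMajorant

variable {f : ℝ → ℝ} {K s b : ℝ}

lemma integrableOn_Ioc_of_abs_le_rpow (hs : -1 < s) (hf : ContinuousOn f (Ioc 0 b))
    (hbound : ∀ t ∈ Ioc 0 b, |f t| ≤ K * t ^ s) : IntegrableOn f (Ioc 0 b) := by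
  rcases le_total b 0 with hb | hb
  · simp [Ioc_eq_empty_of_le hb]
  have hmaj : IntegrableOn (fun t => K * t ^ s) (Ioc 0 b) :=
    ((intervalIntegrable_iff_integrableOn_Ioc_of_le hb).1
      (intervalIntegral.intervalIntegrable_rpow' hs)).const_mul K
  refine hmaj.mono' (hf.aestronglyMeasurable measurableSet_Ioc) ?_
  filter_upwards [ae_restrict_mem measurableSet_Ioc] with t ht
  exact hbound t ht

lemma abs_intervalIntegral_le_of_abs_le_rpow (hs : -1 < s) (hb : 0 ≤ b)
    (hbound : ∀ t ∈ Ioc 0 b, |f t| ≤ K * t ^ s) :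
    |∫ t in 0..b, f t| ≤ K * (b ^ (s + 1) / (s + 1)) := by
  have := intervalIntegral.norm_integral_le_of_norm_le (f := f) hb (.of_forall hbound)
    ((intervalIntegral.intervalIntegrable_rpow' hs).const_mul K)
  rwa [intervalIntegral.integral_const_mul, integral_rpow (Or.inl hs),
    zero_rpow (by linarith), sub_zero] at this

end PowerMajorant

lemma setIntegral_euclideanSpace_fin_one (g : EuclideanSpace ℝ (Fin 1) → ℝ)
    (s : Set (EuclideanSpace ℝ (Fin 1))) :
    ∫ y in s, g y =
      ∫ t in (EuclideanSpace.single 0 ·) ⁻¹' s, g (EuclideanSpace.single 0 t) := by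
  let e : ℝ ≃ᵐ EuclideanSpace ℝ (Fin 1) :=
    (MeasurableEquiv.funUnique (Fin 1) ℝ).symm.trans (MeasurableEquiv.toLp 2 (Fin 1 → ℝ))
  have he : ⇑e = (EuclideanSpace.single 0 ·) := by
    funext t; ext i; fin_cases i; rfl
  have hmp : MeasurePreserving e :=
    (PiLp.volume_preserving_toLp (Fin 1)).comp (volume_preserving_funUnique (Fin 1) ℝ).symm
  simpa only [he] using (hmp.setIntegral_preimage_emb e.measurableEmbedding g s).symm

lemma setIntegral_annulus_eq_intervalIntegral {f : ℝ → ℝ} {x ε r : ℝ} (hε : 0 < ε)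
    (hεr : ε ≤ r) (hf : ContinuousOn f {x}ᶜ) :
    ∫ t in {t | ε < |t - x| ∧ |t - x| < r}, f t = ∫ h in ε..r, (f (x + h) + f (x - h)) := by
  have hset :
      {t | ε < |t - x| ∧ |t - x| < r} = Ioo (x - r) (x - ε) ∪ Ioo (x + ε) (x + r) := by
    ext t
    simp only [mem_ofPred_eq, mem_union, mem_Ioo, lt_abs, abs_lt]
    constructor
    · rintro ⟨h | h, h', h''⟩
      · exact Or.inr ⟨by linarith, by linarith⟩
      · exact Or.inl ⟨by linarith, by linarith⟩
    · rintro (⟨h, h'⟩ | ⟨h, h'⟩)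
      · exact ⟨Or.inr (by linarith), by linarith, by linarith⟩
      · exact ⟨Or.inl (by linarith), by linarith, by linarith⟩
  have hintOn : ∀ {a b}, x ∉ Icc a b → IntegrableOn f (Ioo a b) := fun hx =>
    ((hf.mono (subset_compl_singleton_iff.2 hx)).integrableOn_Icc).mono_set Ioo_subset_Icc_self
  have hshift : ∀ {g : ℝ → ℝ}, (∀ h, 0 < h → g h ≠ x) → Continuous g →
      IntervalIntegrable (fun h => f (g h)) volume ε r := fun hg hgc =>
    (hf.comp hgc.continuousOn fun h hh => hg h (by
      rw [uIcc_of_le hεr] at hh; exact hε.trans_le hh.1)).intervalIntegrable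
  rw [hset, setIntegral_union (Set.disjoint_left.2 fun t h h' => by linarith [h.2, h'.1])
      measurableSet_Ioo (hintOn fun h => by linarith [h.2]) (hintOn fun h => by linarith [h.1]),
    ← integral_Ioc_eq_integral_Ioo, ← integral_Ioc_eq_integral_Ioo,
    ← intervalIntegral.integral_of_le (by linarith),
    ← intervalIntegral.integral_of_le (by linarith),
    intervalIntegral.integral_add (hshift (fun h hh => by linarith) (by fun_prop))
      (hshift (fun h hh => by linarith) (by fun_prop)),
    intervalIntegral.integral_comp_add_left, intervalIntegral.integral_comp_sub_left, add_comm]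

lemma truncFracLapPV_fin_one_iff {α r : ℝ} {u : ℝ → ℝ} (hu : Continuous u) (hr : 0 < r)
    (x L : ℝ) :
    truncFracLapPV 1 α r (fun y => u (y 0)) (EuclideanSpace.single 0 x) L ↔
      Tendsto
        (fun ε => ∫ h in ε..r, (u (x + h) + u (x - h) - 2 * u x) * frakA 1 α * h ^ (-(1 + α)))
        (𝓝[>] 0) (𝓝 L) := by
  refine tendsto_congr' ?_
  filter_upwards [Ioo_mem_nhdsGT hr] with ε ⟨hε, hεr⟩
  have hcont : ContinuousOn (fun t => (u t - u x) * frakA 1 α * |x - t| ^ (-(1 + α))) {x}ᶜ :=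
    fun t ht => by
      have : |x - t| ≠ 0 := abs_ne_zero.2 (sub_ne_zero.2 (Ne.symm ht))
      fun_prop (disch := exact Or.inl this)
  simp only [setIntegral_euclideanSpace_fin_one, preimage_ofPred_eq, ← PiLp.single_sub,
    PiLp.norm_single, Real.norm_eq_abs, PiLp.single_apply, if_true, Nat.cast_one]
  rw [setIntegral_annulus_eq_intervalIntegral hε hεr.le hcont]
  refine intervalIntegral.integral_congr fun h hh => ?_
  have h0 : 0 < h := hε.trans_le (uIcc_of_le hεr.le ▸ hh).1
  simp only [sub_add_cancel_left, sub_sub_cancel, abs_neg, abs_of_pos h0]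
  ring

theorem statement15 (α p : ℝ) (hα1 : 0 < α) (hα2 : α < 2) (hp : 0 < p) :
    ∃ c : ℝ, 0 < c ∧
      ∀ x : ℝ, 1 ≤ x →
        ∃ L : ℝ, truncFracLapPV 1 α 1 (wp 1 one_pos p) (EuclideanSpace.single 0 x) L ∧
          |L| ≤ c * x ^ (p - 2) := by
  obtain ⟨C, hC, hsecond⟩ := exists_abs_rpow_second_diff_le hp.le
  have hA := frakA_pos (d := 1) hα1 hα2
  refine ⟨frakA 1 α * C / (2 - α), by have := sub_pos.2 hα2; positivity, fun x hx => ?_⟩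
  set u : ℝ → ℝ := fun t => max t 0 ^ p
  set F : ℝ → ℝ := fun h => (u (x + h) + u (x - h) - 2 * u x) * frakA 1 α * h ^ (-(1 + α))
  have hFcont : ContinuousOn F (Ioc 0 1) := fun h hh => by
    have : h ≠ 0 := hh.1.ne'
    fun_prop (disch := first | exact Or.inr hp.le | exact Or.inl this)
  have hFbound : ∀ h ∈ Ioc 0 1, |F h| ≤ frakA 1 α * (C * x ^ (p - 2)) * h ^ (1 - α) := by
    rintro h ⟨h0, h1⟩
    refine abs_second_diff_mul_rpow_le h0 hA.le ?_
    simp only [u, max_eq_left (by linarith : (0 : ℝ) ≤ x + h),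
      max_eq_left (by linarith : (0 : ℝ) ≤ x - h), max_eq_left (by linarith : (0 : ℝ) ≤ x)]
    exact hsecond x h (by linarith) h0.le (by linarith)
  have hs : (-1 : ℝ) < 1 - α := by linarith
  refine ⟨∫ h in 0..1, F h, ?_, ?_⟩
  · have hu : Continuous u := by fun_prop (disch := exact hp.le)
    exact (truncFracLapPV_fin_one_iff hu one_pos x _).2 (tendsto_intervalIntegral_nhdsGT one_pos
      (integrableOn_Ioc_of_abs_le_rpow hs hFcont hFbound))
  · calc |∫ h in 0..1, F h|
        ≤ frakA 1 α * (C * x ^ (p - 2)) * (1 ^ (1 - α + 1) / (1 - α + 1)) :=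
          abs_intervalIntegral_le_of_abs_le_rpow hs zero_le_one hFbound
      _ = frakA 1 α * C / (2 - α) * x ^ (p - 2) := by rw [one_rpow]; ring_nf
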